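/- In the value-permutation model, the dual Burnside kernel Q is strongly lumpable with respect to the partition of S_k* by the number of fixed symbols: for all g₁, g₂ ∈ S_k* with f(g₁) = f(g₂) and every integer s ≥ 1, ∑_{h ∈ S_k, f(h) = s} Q(g₁,h) = ∑_{h ∈ S_k, f(h) = s} Q(g₂,h). -/

import Mathlib

/-! Relabelling the symbols by `σ` conjugates the action, so `Q (σ g σ⁻¹) (σ h σ⁻¹) = Q g h`,
while `Q g h` depends on `g` only through its fixed-point set. If `f(g₁) = f(g₂)`, pick `σ`
carrying `Fix(g₁)` onto `Fix(g₂)`; then `h ↦ σ h σ⁻¹` preserves `f` and turns the row of `g₁`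
into the row of `g₂`. -/

open Finset

noncomputable section

variable (n k : ℕ)

/-- Fixed words of `g ∈ S_k` under the value-permutation action on `[k]^n`:
`X_g = {x : g ∘ x = x}`. -/
def fixedWords (g : Equiv.Perm (Fin k)) : Finset (Fin n → Fin k) :=
  Finset.univ.filter fun x => (fun i => g (x i)) = x

/-- Stabilizer of a word `x ∈ [k]^n` under the value-permutation action. -/
def stabWord (x : Fin n → Fin k) : Finset (Equiv.Perm (Fin k)) :=
  Finset.univ.filter fun g => (fun i => g (x i)) = x

/-- Number of fixed symbols `f(g) = |Fix(g)|` of `g ∈ S_k`. -/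
def numFix (g : Equiv.Perm (Fin k)) : ℕ :=
  (Finset.univ.filter fun a : Fin k => g a = a).card

/-- The dual Burnside kernel for the value-permutation model `S_k ↷ [k]^n`. -/
def Q (g h : Equiv.Perm (Fin k)) : ℝ :=
  ∑ x ∈ fixedWords n k g ∩ fixedWords n k h,
    1 / (((fixedWords n k g).card : ℝ) * ((stabWord n k x).card : ℝ))

namespace Equiv.Perm

variable {α : Type*} [Fintype α] [DecidableEq α]

lemma filter_apply_eq_self_eq_compl_support (g : Perm α) :
    univ.filter (fun a => g a = a) = g.supportᶜ := by
  ext a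
  simp [mem_support]

lemma exists_conj_apply_eq_self_iff_of_card_eq {g₁ g₂ : Perm α}
    (h : #(univ.filter fun a => g₁ a = a) = #(univ.filter fun a => g₂ a = a)) :
    ∃ σ : Perm α, ∀ a, (σ * g₁ * σ⁻¹) a = a ↔ g₂ a = a := by
  let e : {a // g₁ a = a} ≃ {a // g₂ a = a} :=
    Fintype.equivOfCardEq (by rwa [Fintype.card_subtype, Fintype.card_subtype])
  refine ⟨e.extendSubtype, fun a => ?_⟩
  obtain ⟨b, rfl⟩ := e.extendSubtype.surjective a
  rw [mul_apply, mul_apply, coe_inv, symm_apply_apply, EmbeddingLike.apply_eq_iff_eq]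
  by_cases hb : g₁ b = b
  · simp only [hb, e.extendSubtype_mem b hb]
  · simp only [hb, e.extendSubtype_not_mem b hb]

end Equiv.Perm

open Equiv

lemma numFix_conj (σ g : Perm (Fin k)) : numFix k (σ * g * σ⁻¹) = numFix k g := by
  simp only [numFix, Perm.filter_apply_eq_self_eq_compl_support, card_compl,
    Perm.card_support_conj]

lemma mem_fixedWords {g : Perm (Fin k)} {x : Fin n → Fin k} :
    x ∈ fixedWords n k g ↔ ∀ i, g (x i) = x i := by
  simp [fixedWords, funext_iff]

lemma mem_stabWord {g : Perm (Fin k)} {x : Fin n → Fin k} :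
    g ∈ stabWord n k x ↔ ∀ i, g (x i) = x i := by
  simp [stabWord, funext_iff]

lemma fixedWords_congr {g g' : Perm (Fin k)} (hgg' : ∀ a, g a = a ↔ g' a = a) :
    fixedWords n k g = fixedWords n k g' := by
  ext x
  simp only [mem_fixedWords, hgg']

lemma Q_congr_left {g g' : Perm (Fin k)} (hgg' : ∀ a, g a = a ↔ g' a = a)
    (h : Perm (Fin k)) : Q n k g h = Q n k g' h := by
  simp only [Q, fixedWords_congr n k hgg']

lemma fixedWords_conj (σ g : Perm (Fin k)) :
    fixedWords n k (σ * g * σ⁻¹) =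
      (fixedWords n k g).map (piCongrRight fun _ : Fin n => σ).toEmbedding := by
  ext x
  simp [mem_fixedWords, ← Perm.eq_inv_iff_eq, piCongrRight]

lemma stabWord_piCongrRight (σ : Perm (Fin k)) (x : Fin n → Fin k) :
    stabWord n k (piCongrRight (fun _ => σ) x) =
      (stabWord n k x).map (MulAut.conj σ).toEquiv.toEmbedding := by
  ext g
  simp only [mem_map_equiv, mem_stabWord, piCongrRight_apply, Pi.map_apply]
  simp [Perm.mul_apply, ← Perm.eq_inv_iff_eq]

lemma Q_conj (σ g h : Perm (Fin k)) : Q n k (σ * g * σ⁻¹) (σ * h * σ⁻¹) = Q n k g h := by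
  simp only [Q, fixedWords_conj, ← map_inter, sum_map, card_map, coe_toEmbedding,
    stabWord_piCongrRight]

theorem value_model_lumpable_by_fixcount
    (g₁ g₂ : Equiv.Perm (Fin k))
    (hfix : numFix k g₁ = numFix k g₂)
    (s : ℕ) :
    (∑ h ∈ Finset.univ.filter (fun h : Equiv.Perm (Fin k) => numFix k h = s), Q n k g₁ h)
      = ∑ h ∈ Finset.univ.filter (fun h : Equiv.Perm (Fin k) => numFix k h = s), Q n k g₂ h := by
  obtain ⟨σ, hσ⟩ := Perm.exists_conj_apply_eq_self_iff_of_card_eq hfix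
  refine sum_equiv (MulAut.conj σ).toEquiv (fun h => ?_) (fun h _ => ?_)
  · simp [numFix_conj]
  · rw [← Q_conj n k σ g₁ h, Q_congr_left n k hσ]
    rfl

end
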